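/- arXiv:1802.05795 — 2 statements merged into one kernel-verified Lean document; each statement's English description precedes it below -/
import Mathlib

section
/- A type (C) ILP min {cᵀx : Ax ≤ b, x ≥ 0} with fixed real matrix A, b ∈ [b̲,b̄], c ∈ [c̲,c̄] has strongly zero duality gap if and only if at least one of the real systems Ax ≤ b̲, x ≥ 0, or Aᵀy ≤ c̲, y ≤ 0, is feasible. -/
open Matrix Set

/-!
If the primal and the dual are both infeasible their values are `⊤ ≠ ⊥`. Otherwise the
values agree: weak duality gives `dual ≤ primal`, and Farkas' lemma applied to the feasible
system augmented by the cut `cᵀx ≤ s` turns every `s` below the primal value into a dual point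
of value above `s` (symmetrically when the dual is feasible). Feasibility of `Ax ≤ b, x ≥ 0`
only improves as `b` grows, and that of `Aᵀy ≤ c, y ≤ 0` as `c` grows, so over the box it is
decided at `b̲` and `c̲`.

Farkas' lemma comes from separating a point from the cone `{Mu : u ≥ 0}`, which is closed:
either `M` is injective on the coefficient subspace, or moving along a kernel direction until a
coefficient vanishes (conic Carathéodory) reduces to finitely many smaller subspaces.
-/

/-- Optimal value of the primal type-(C) LP `min cᵀx  s.t.  Ax ≤ b, x ≥ 0`. -/
noncomputable def primalValC {m n : ℕ} (A : Matrix (Fin m) (Fin n) ℝ) (b : Fin m → ℝ)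
    (c : Fin n → ℝ) : EReal :=
  sInf ((fun x => ((c ⬝ᵥ x : ℝ) : EReal)) '' {x | A.mulVec x ≤ b ∧ 0 ≤ x})

/-- Optimal value of the dual type-(C) LP `max bᵀy  s.t.  Aᵀy ≤ c, y ≤ 0`. -/
noncomputable def dualValC {m n : ℕ} (A : Matrix (Fin m) (Fin n) ℝ) (b : Fin m → ℝ)
    (c : Fin n → ℝ) : EReal :=
  sSup ((fun y => ((b ⬝ᵥ y : ℝ) : EReal)) '' {y | Aᵀ.mulVec y ≤ c ∧ y ≤ 0})

section ConicHull

variable {ι E : Type*} [Fintype ι] [AddCommGroup E] [Module ℝ E]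

lemma exists_sub_smul_nonneg_eq_zero {u g : ι → ℝ} (hu : 0 ≤ u) (hg : ∃ i, 0 < g i) :
    ∃ t : ℝ, ∃ j, 0 < g j ∧ 0 ≤ u - t • g ∧ (u - t • g) j = 0 := by
  classical
  obtain ⟨j, hj, hmin⟩ := (Finset.univ.filter fun i => 0 < g i).exists_min_image
    (fun i => u i / g i) (by simpa [Finset.Nonempty] using hg)
  simp only [Finset.mem_filter, Finset.mem_univ, true_and] at hj hmin
  refine ⟨u j / g j, j, hj, fun i => ?_, by simp [hj.ne']⟩
  have ht : 0 ≤ u j / g j := div_nonneg (hu j) hj.le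
  rcases lt_or_ge 0 (g i) with hgi | hgi
  · simpa [sub_nonneg, ← le_div_iff₀ hgi] using hmin i hgi
  · simpa using (mul_nonpos_of_nonneg_of_nonpos ht hgi).trans (hu i)

lemma LinearMap.image_nonneg_inter_subset_iUnion (L : (ι → ℝ) →ₗ[ℝ] E)
    (W : Submodule ℝ (ι → ℝ)) {g : ι → ℝ} (hgW : g ∈ W) (hLg : L g = 0) (hg : ∃ i, 0 < g i) :
    L '' (Ici 0 ∩ W) ⊆
      ⋃ j ∈ {j | 0 < g j}, L '' (Ici 0 ∩ ↑(W ⊓ LinearMap.ker (LinearMap.proj j))) := by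
  rintro _ ⟨u, ⟨hu, huW⟩, rfl⟩
  obtain ⟨t, j, hj, hnonneg, hzero⟩ := exists_sub_smul_nonneg_eq_zero hu hg
  refine mem_biUnion hj ⟨u - t • g, ⟨hnonneg, W.sub_mem huW (W.smul_mem t hgW), hzero⟩, ?_⟩
  simp [hLg]

variable [TopologicalSpace E] [IsTopologicalAddGroup E] [ContinuousSMul ℝ E] [T2Space E]

lemma LinearMap.isClosed_image_nonneg_inter (L : (ι → ℝ) →ₗ[ℝ] E) (W : Submodule ℝ (ι → ℝ)) :
    IsClosed (L '' (Ici 0 ∩ W)) := by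
  induction hW : Module.finrank ℝ W using Nat.strong_induction_on generalizing W with
  | _ d ih =>
    by_cases hinj : ∀ g ∈ W, L g = 0 → g = 0
    · have hker : LinearMap.ker (L ∘ₗ W.subtype) = ⊥ := LinearMap.ker_eq_bot'.2 fun g hg =>
        Subtype.ext (hinj g g.2 hg)
      have himage : L '' (Ici 0 ∩ W) = (L ∘ₗ W.subtype) '' (W.subtype ⁻¹' Ici 0) := by
        rw [LinearMap.coe_comp, image_comp, Submodule.coe_subtype, image_preimage_eq_inter_range,
          Subtype.range_coe]
      rw [himage]
      exact (LinearMap.isClosedEmbedding_of_injective hker).isClosedMap _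
        (isClosed_Ici.preimage continuous_subtype_val)
    obtain ⟨g, hgW, hLg, hg⟩ : ∃ g ∈ W, L g = 0 ∧ ∃ i, 0 < g i := by
      push Not at hinj
      obtain ⟨g, hgW, hLg, hg0⟩ := hinj
      obtain ⟨i, hi⟩ := Function.ne_iff.1 hg0
      rcases hi.lt_or_gt with hneg | hpos
      · exact ⟨-g, W.neg_mem hgW, by simp [hLg], i, by simpa using hneg⟩
      · exact ⟨g, hgW, hLg, i, hpos⟩
    rw [subset_antisymm (L.image_nonneg_inter_subset_iUnion W hgW hLg hg)
      (iUnion₂_subset fun j _ => image_mono (inter_subset_inter_right _ inf_le_left))]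
    refine (toFinite _).isClosed_biUnion fun j hj => ih _ ?_ _ rfl
    rw [← hW]
    refine Submodule.finrank_lt_finrank_of_lt (inf_lt_left.2 fun hle => ?_)
    exact (ne_of_gt (show 0 < g j from hj)) (hle hgW)

lemma LinearMap.isClosed_image_nonneg (L : (ι → ℝ) →ₗ[ℝ] E) : IsClosed (L '' Ici 0) := by
  simpa using L.isClosed_image_nonneg_inter ⊤

end ConicHull

namespace Matrix

variable {k l : Type*} [Fintype k] [Fintype l]

theorem farkas (N : Matrix k l ℝ) (q : k → ℝ) (h : ¬∃ u, 0 ≤ u ∧ N *ᵥ u = q) :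
    ∃ w, 0 ≤ Nᵀ *ᵥ w ∧ q ⬝ᵥ w < 0 := by
  classical
  let C : ProperCone ℝ (k → ℝ) :=
    ⟨(PointedCone.positive ℝ (l → ℝ)).map N.mulVecLin, by
      simpa [PointedCone.coe_map] using N.mulVecLin.isClosed_image_nonneg⟩
  obtain ⟨f, hfC, hfq⟩ := C.hyperplane_separation_point (x₀ := q) (by simpa [C] using h)
  set w : k → ℝ := fun i => f (Pi.single i 1)
  have hf : ∀ x, f x = x ⬝ᵥ w := fun x => by
    conv_lhs => rw [pi_eq_sum_univ' x]
    simp [dotProduct, w]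
  refine ⟨w, fun j => ?_, by rwa [← hf]⟩
  have := hfC (N *ᵥ Pi.single j 1) ⟨Pi.single j 1, by simp [Pi.single_nonneg], rfl⟩
  rwa [hf, mulVec_single_one] at this

theorem farkas_le (M : Matrix k l ℝ) (q : k → ℝ) (h : ¬∃ u, 0 ≤ u ∧ M *ᵥ u ≤ q) :
    ∃ w, 0 ≤ w ∧ 0 ≤ Mᵀ *ᵥ w ∧ q ⬝ᵥ w < 0 := by
  classical
  have h' : ¬∃ z, 0 ≤ z ∧ fromCols M (1 : Matrix k k ℝ) *ᵥ z = q := by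
    rintro ⟨z, hz, rfl⟩
    refine h ⟨z ∘ Sum.inl, fun j => hz (Sum.inl j), ?_⟩
    rw [fromCols_mulVec, one_mulVec]
    exact le_add_of_nonneg_right fun i => hz (Sum.inr i)
  obtain ⟨w, hw, hwq⟩ := farkas _ q h'
  rw [transpose_fromCols, transpose_one, fromRows_mulVec, one_mulVec] at hw
  exact ⟨w, fun i => hw (Sum.inr i), fun j => hw (Sum.inl j), hwq⟩

end Matrix

section LinearProgram

variable {m n : Type*} [Fintype m] [Fintype n] (A : Matrix m n ℝ) {b : m → ℝ} {c : n → ℝ}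

theorem weak_duality {x : n → ℝ} {y : m → ℝ} (hx : A *ᵥ x ≤ b) (hx0 : 0 ≤ x)
    (hy : Aᵀ *ᵥ y ≤ c) (hy0 : y ≤ 0) : b ⬝ᵥ y ≤ c ⬝ᵥ x :=
  calc b ⬝ᵥ y ≤ A *ᵥ x ⬝ᵥ y := by
        simpa using dotProduct_le_dotProduct_of_nonneg_right hx (neg_nonneg.2 hy0)
    _ = x ⬝ᵥ Aᵀ *ᵥ y := by rw [dotProduct_transpose_mulVec, dotProduct_comm]
    _ ≤ x ⬝ᵥ c := dotProduct_le_dotProduct_of_nonneg_left hy hx0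
    _ = c ⬝ᵥ x := dotProduct_comm _ _

theorem exists_dual_feasible_gt (s : ℝ) (hP : ∃ x, A *ᵥ x ≤ b ∧ 0 ≤ x)
    (hs : ∀ x, A *ᵥ x ≤ b → 0 ≤ x → s < c ⬝ᵥ x) :
    ∃ y, Aᵀ *ᵥ y ≤ c ∧ y ≤ 0 ∧ s < b ⬝ᵥ y := by
  have hcut : ¬∃ x, 0 ≤ x ∧ fromRows A (replicateRow Unit c) *ᵥ x ≤ b ⊕ᵥ fun _ => s := by
    rintro ⟨x, hx0, hx⟩
    rw [fromRows_mulVec, Sum.elim_le_elim_iff] at hx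
    exact (hs x hx.1 hx0).not_ge (by simpa [mulVec, dotProduct_comm] using hx.2 ())
  obtain ⟨w, hw, hwA, hwb⟩ := farkas_le _ _ hcut
  obtain ⟨v, t, rfl⟩ : ∃ v t, w = v ⊕ᵥ fun _ => t :=
    ⟨w ∘ Sum.inl, w (Sum.inr ()), by ext (_ | _) <;> rfl⟩
  have hcol : replicateCol Unit c *ᵥ (fun _ => t) = t • c := by
    ext; simp [mulVec, dotProduct, mul_comm]
  simp only [transpose_fromRows, transpose_replicateRow, fromCols_mulVec, Sum.elim_comp_inl,
    Sum.elim_comp_inr, hcol, sumElim_dotProduct_sumElim] at hwA hwb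
  have hv : 0 ≤ v := fun i => hw (Sum.inl i)
  have hvb : b ⬝ᵥ v + s * t < 0 := by simpa [dotProduct] using hwb
  obtain ⟨x, hx, hx0⟩ := hP
  have ht : 0 < t := by
    refine (hw (Sum.inr ()) : 0 ≤ t).lt_of_ne fun ht0 => ?_
    subst ht0
    -- with `t = 0`, `-v` is dual feasible for the zero objective
    have := weak_duality A (c := 0) hx hx0 (y := -v)
      (by simpa [mulVec_neg, neg_mulVec] using hwA) (by simpa using hv)
    simp at hvb this
    linarith
  refine ⟨-(t⁻¹ • v), fun j => ?_, fun i => ?_, ?_⟩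
  · have key : c j + t⁻¹ * (Aᵀ *ᵥ v) j = t⁻¹ * ((Aᵀ *ᵥ v) j + t * c j) := by
      field_simp; ring
    have := mul_nonneg (inv_nonneg.2 ht.le) (hwA j)
    simp only [mulVec_neg, mulVec_smul, Pi.neg_apply, Pi.smul_apply, smul_eq_mul,
      Pi.add_apply] at this ⊢
    linarith
  · simpa using mul_nonneg (inv_nonneg.2 ht.le) (hv i)
  · have key : b ⬝ᵥ -(t⁻¹ • v) - s = -(t⁻¹ * (b ⬝ᵥ v + s * t)) := by
      simp only [dotProduct_neg, dotProduct_smul, smul_eq_mul]; field_simp; ring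
    have := mul_pos (inv_pos.2 ht) (neg_pos.2 hvb)
    linarith

theorem exists_primal_feasible_lt (s : ℝ) (hD : ∃ y, Aᵀ *ᵥ y ≤ c ∧ y ≤ 0)
    (hs : ∀ y, Aᵀ *ᵥ y ≤ c → y ≤ 0 → b ⬝ᵥ y < s) :
    ∃ x, A *ᵥ x ≤ b ∧ 0 ≤ x ∧ c ⬝ᵥ x < s := by
  -- the dual of `(A, b, c)` is the primal of `(-Aᵀ, c, b)` under `y ↦ -y`
  obtain ⟨y, hy, hy0, hys⟩ := exists_dual_feasible_gt (-Aᵀ) (b := c) (c := b) (-s)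
    (by
      obtain ⟨y, hy, hy0⟩ := hD
      exact ⟨-y, by simpa [mulVec_neg, neg_mulVec] using hy, by simpa using hy0⟩)
    (fun x hx hx0 => by
      have := hs (-x) (by simpa [mulVec_neg, neg_mulVec] using hx) (by simpa using hx0)
      simp only [dotProduct_neg] at this
      linarith)
  refine ⟨-y, by simpa [mulVec_neg, neg_mulVec] using hy, by simpa using hy0, ?_⟩
  simp only [dotProduct_neg]
  linarith

end LinearProgram

section TypeC

variable {m n : ℕ} (A : Matrix (Fin m) (Fin n) ℝ) {b : Fin m → ℝ} {c : Fin n → ℝ}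

theorem primalValC_le {x : Fin n → ℝ} (hx : A *ᵥ x ≤ b) (hx0 : 0 ≤ x) :
    primalValC A b c ≤ (c ⬝ᵥ x : ℝ) :=
  sInf_le (mem_image_of_mem _ ⟨hx, hx0⟩)

theorem le_dualValC {y : Fin m → ℝ} (hy : Aᵀ *ᵥ y ≤ c) (hy0 : y ≤ 0) :
    (b ⬝ᵥ y : ℝ) ≤ dualValC A b c :=
  le_sSup (mem_image_of_mem _ ⟨hy, hy0⟩)

theorem dualValC_le_primalValC : dualValC A b c ≤ primalValC A b c :=
  sSup_le <| forall_mem_image.2 fun _ hy => le_sInf <| forall_mem_image.2 fun _ hx =>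
    EReal.coe_le_coe_iff.2 (weak_duality A hx.1 hx.2 hy.1 hy.2)

theorem primalValC_le_dualValC_of_primal_feasible (hP : ∃ x, A *ᵥ x ≤ b ∧ 0 ≤ x) :
    primalValC A b c ≤ dualValC A b c := by
  refine EReal.ge_of_forall_gt_iff_ge.1 fun s hs => ?_
  obtain ⟨y, hy, hy0, hsy⟩ := exists_dual_feasible_gt A s hP fun x hx hx0 =>
    EReal.coe_lt_coe_iff.1 (hs.trans_le (primalValC_le A hx hx0))
  exact (EReal.coe_le_coe_iff.2 hsy.le).trans (le_dualValC A hy hy0)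

theorem primalValC_le_dualValC_of_dual_feasible (hD : ∃ y, Aᵀ *ᵥ y ≤ c ∧ y ≤ 0) :
    primalValC A b c ≤ dualValC A b c := by
  refine EReal.le_of_forall_lt_iff_le.1 fun s hs => ?_
  obtain ⟨x, hx, hx0, hxs⟩ := exists_primal_feasible_lt A s hD fun y hy hy0 =>
    EReal.coe_lt_coe_iff.1 ((le_dualValC A hy hy0).trans_lt hs)
  exact (primalValC_le A hx hx0).trans (EReal.coe_le_coe_iff.2 hxs.le)

theorem primalValC_eq_dualValC_iff :
    primalValC A b c = dualValC A b c ↔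
      (∃ x, A *ᵥ x ≤ b ∧ 0 ≤ x) ∨ ∃ y, Aᵀ *ᵥ y ≤ c ∧ y ≤ 0 := by
  refine ⟨fun h => ?_, fun h => le_antisymm ?_ (dualValC_le_primalValC A)⟩
  · by_contra hinf
    rw [not_or] at hinf
    have hP : primalValC A b c = ⊤ :=
      sInf_eq_top.2 <| forall_mem_image.2 fun x hx => (hinf.1 ⟨x, hx⟩).elim
    have hD : dualValC A b c = ⊥ :=
      sSup_eq_bot.2 <| forall_mem_image.2 fun y hy => (hinf.2 ⟨y, hy⟩).elim
    simp [hP, hD] at h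
  · exact h.elim (primalValC_le_dualValC_of_primal_feasible A)
      (primalValC_le_dualValC_of_dual_feasible A)

end TypeC

/-- A type (C) ILP with fixed matrix has strongly zero duality gap iff
`Ax ≤ b̲, x ≥ 0` or `Aᵀy ≤ c̲, y ≤ 0` is feasible. -/
theorem typeC_degenerate_strongly_zero_dg_iff {m n : ℕ}
    (A : Matrix (Fin m) (Fin n) ℝ) (bL bU : Fin m → ℝ) (cL cU : Fin n → ℝ)
    (hb : bL ≤ bU) (hc : cL ≤ cU) :
    (∀ b c, bL ≤ b → b ≤ bU → cL ≤ c → c ≤ cU →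
        primalValC A b c = dualValC A b c) ↔
      ((∃ x : Fin n → ℝ, A.mulVec x ≤ bL ∧ 0 ≤ x) ∨
       (∃ y : Fin m → ℝ, Aᵀ.mulVec y ≤ cL ∧ y ≤ 0)) := by
  simp only [primalValC_eq_dualValC_iff]
  refine ⟨fun h => h bL cL le_rfl hb le_rfl hc, fun h b c hbL _ hcL _ => ?_⟩
  exact h.imp (fun ⟨x, hx, hx0⟩ => ⟨x, hx.trans hbL, hx0⟩)
    fun ⟨y, hy, hy0⟩ => ⟨y, hy.trans hcL, hy0⟩
end

section
/- A type (A) ILP min {cᵀx : Ax = b, x ≥ 0} with fixed real matrix A, b ∈ [b̲,b̄], c ∈ [c̲,c̄] has strongly zero duality gap if and only if either (i) for every sign vector p ∈ {±1}^m the system Ax = b_c + diag(p)·Δ_b, x ≥ 0 is feasible, or (ii) the system Aᵀy ≤ c̲ is feasible. -/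
open Matrix


/-- Optimal value of the primal type-(A) LP `min cᵀx  s.t.  Ax = b, x ≥ 0`. -/
noncomputable def primalValA {m n : ℕ} (A : Matrix (Fin m) (Fin n) ℝ) (b : Fin m → ℝ)
    (c : Fin n → ℝ) : EReal :=
  sInf ((fun x => ((c ⬝ᵥ x : ℝ) : EReal)) '' {x | A.mulVec x = b ∧ 0 ≤ x})

/-- Optimal value of the dual type-(A) LP `max bᵀy  s.t.  Aᵀy ≤ c`. -/
noncomputable def dualValA {m n : ℕ} (A : Matrix (Fin m) (Fin n) ℝ) (b : Fin m → ℝ)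
    (c : Fin n → ℝ) : EReal :=
  sSup ((fun y => ((b ⬝ᵥ y : ℝ) : EReal)) '' {y | Aᵀ.mulVec y ≤ c})

/-!
Both optimal values live in `EReal`, where an infeasible primal has value `⊤` and an infeasible
dual has value `⊥`. By Farkas' lemma the two values agree exactly when the primal or the dual is
feasible. Strongly zero duality gap thus says that, for all `b` and `c` in the box, `Ax = b, x ≥ 0`
or `Aᵀy ≤ c` is feasible. Since the dual feasible region only grows with `c`, the dual is feasible
throughout iff it is feasible at `c̲`; since the feasible right-hand sides form a convex cone, the
primal is feasible throughout iff it is feasible at the `2^m` vertices of the box.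
-/


theorem Finset.sum_insert_update_smul {ι κ : Type*} [DecidableEq ι] {s : Finset ι} {i : ι}
    (hi : i ∉ s) (x : ι → ℝ) (μ : ℝ) (a : ι → κ → ℝ) :
    ∑ j ∈ insert i s, Function.update x i μ j • a j = μ • a i + ∑ j ∈ s, x j • a j := by
  rw [Finset.sum_insert hi, Function.update_self]
  congr 1
  exact Finset.sum_congr rfl fun j hj => by rw [Function.update_of_ne (ne_of_mem_of_not_mem hj hi)]

section Farkas

variable {ι κ : Type*} [Fintype κ]

theorem farkas_sum_insert [DecidableEq ι] {s : Finset ι} {i : ι} (hi : i ∉ s)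
    (ih : ∀ (a : ι → κ → ℝ) (b : κ → ℝ), (∃ x : ι → ℝ, 0 ≤ x ∧ ∑ j ∈ s, x j • a j = b) ∨
      ∃ y : κ → ℝ, (∀ j ∈ s, 0 ≤ y ⬝ᵥ a j) ∧ y ⬝ᵥ b < 0)
    (a : ι → κ → ℝ) (b : κ → ℝ) :
    (∃ x : ι → ℝ, 0 ≤ x ∧ ∑ j ∈ insert i s, x j • a j = b) ∨
      ∃ y : κ → ℝ, (∀ j ∈ insert i s, 0 ≤ y ⬝ᵥ a j) ∧ y ⬝ᵥ b < 0 := by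
  classical
  rcases ih a b with ⟨x, hx, hxb⟩ | ⟨y, hy, hyb⟩
  · refine .inl ⟨Function.update x i 0, le_update_iff.2 ⟨le_rfl, fun j _ => hx j⟩, ?_⟩
    rw [Finset.sum_insert_update_smul hi, hxb, zero_smul, zero_add]
  by_cases hyi : 0 ≤ y ⬝ᵥ a i
  · exact .inr ⟨y, Finset.forall_mem_insert _ _ _ |>.2 ⟨hyi, hy⟩, hyb⟩
  push Not at hyi
  set α := y ⬝ᵥ a i
  -- `P` projects along `a i` onto the hyperplane `y ⬝ᵥ v = 0`.
  set P : Matrix κ κ ℝ := 1 - α⁻¹ • vecMulVec (a i) y with hPdef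
  have hP : ∀ v, P *ᵥ v = v - (α⁻¹ * (y ⬝ᵥ v)) • a i := fun v => by
    simp [hPdef, sub_mulVec, smul_mulVec, vecMulVec_mulVec, smul_smul]
  have hPi : P *ᵥ a i = 0 := by rw [hP, inv_mul_cancel₀ hyi.ne, one_smul, sub_self]
  rcases ih (fun j => P *ᵥ a j) (P *ᵥ b) with ⟨x, hx, hxb⟩ | ⟨z, hz, hzb⟩
  · set r := b - ∑ j ∈ s, x j • a j
    have hr : r = (α⁻¹ * (y ⬝ᵥ r)) • a i := by
      have : P *ᵥ r = 0 := by simp [r, mulVec_sub, mulVec_sum, mulVec_smul, hxb]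
      rwa [hP, sub_eq_zero] at this
    have hyr : y ⬝ᵥ r < 0 := by
      have : 0 ≤ y ⬝ᵥ ∑ j ∈ s, x j • a j := by
        rw [dotProduct_sum]
        exact Finset.sum_nonneg fun j hj => by
          rw [dotProduct_smul]; exact mul_nonneg (hx j) (hy j hj)
      simp only [r, dotProduct_sub]
      linarith
    have hμ : 0 ≤ α⁻¹ * (y ⬝ᵥ r) :=
      mul_nonneg_of_nonpos_of_nonpos (inv_nonpos.2 hyi.le) hyr.le
    refine .inl ⟨Function.update x i _, le_update_iff.2 ⟨hμ, fun j _ => hx j⟩, ?_⟩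
    rw [Finset.sum_insert_update_smul hi, ← hr]
    simp [r]
  · refine .inr ⟨z ᵥ* P, Finset.forall_mem_insert _ _ _ |>.2 ⟨?_, fun j hj => ?_⟩, ?_⟩
    · rw [← dotProduct_mulVec, hPi, dotProduct_zero]
    · rw [← dotProduct_mulVec]; exact hz j hj
    · rwa [← dotProduct_mulVec]

theorem farkas_sum (s : Finset ι) (a : ι → κ → ℝ) (b : κ → ℝ) :
    (∃ x : ι → ℝ, 0 ≤ x ∧ ∑ j ∈ s, x j • a j = b) ∨
      ∃ y : κ → ℝ, (∀ j ∈ s, 0 ≤ y ⬝ᵥ a j) ∧ y ⬝ᵥ b < 0 := by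
  classical
  induction s using Finset.induction_on generalizing a b with
  | empty =>
    by_cases hb : b = 0
    · exact .inl ⟨0, le_rfl, by simp [hb]⟩
    · have : 0 < b ⬝ᵥ b := lt_of_le_of_ne (Finset.sum_nonneg fun k _ => mul_self_nonneg (b k))
        (Ne.symm (dotProduct_self_eq_zero.not.2 hb))
      exact .inr ⟨-b, by simp, by simpa using this⟩
  | insert i s hi ih => exact farkas_sum_insert hi ih a b

end Farkas

theorem Matrix.farkas_s10 {κ ι : Type*} [Fintype κ] [Fintype ι] (A : Matrix κ ι ℝ) (b : κ → ℝ) :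
    (∃ x, 0 ≤ x ∧ A *ᵥ x = b) ∨ ∃ y, 0 ≤ Aᵀ *ᵥ y ∧ b ⬝ᵥ y < 0 := by
  have hcols : ∀ x, ∑ j, x j • Aᵀ j = A *ᵥ x := fun x => by
    ext k; simp [mulVec, dotProduct, mul_comm]
  rcases farkas_sum Finset.univ (fun j => Aᵀ j) b with ⟨x, hx, hxb⟩ | ⟨y, hy, hyb⟩
  · exact .inl ⟨x, hx, by rw [← hcols, hxb]⟩
  · refine .inr ⟨y, fun j => ?_, by rwa [dotProduct_comm]⟩
    exact (hy j (Finset.mem_univ j)).trans_eq (dotProduct_comm _ _)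

theorem weak_duality_s10 {κ ι : Type*} [Fintype κ] [Fintype ι] {A : Matrix κ ι ℝ} {b : κ → ℝ}
    {c x : ι → ℝ} {y : κ → ℝ} (hx : A *ᵥ x = b) (hx₀ : 0 ≤ x) (hy : Aᵀ *ᵥ y ≤ c) :
    b ⬝ᵥ y ≤ c ⬝ᵥ x := by
  rw [← hx, dotProduct_comm, dotProduct_mulVec, ← mulVec_transpose]
  exact dotProduct_le_dotProduct_of_nonneg_right hy hx₀

section LinearProgram

variable {m n : ℕ} (A : Matrix (Fin m) (Fin n) ℝ) (b : Fin m → ℝ) (c : Fin n → ℝ)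

theorem dualValA_le_primalValA : dualValA A b c ≤ primalValA A b c := by
  refine sSup_le ?_
  rintro _ ⟨y, hy, rfl⟩
  refine le_sInf ?_
  rintro _ ⟨x, ⟨hxb, hx⟩, rfl⟩
  exact EReal.coe_le_coe_iff.2 (weak_duality_s10 hxb hx hy)

theorem primalValA_eq_top {b : Fin m → ℝ} (hP : ¬∃ x, A *ᵥ x = b ∧ 0 ≤ x) :
    primalValA A b c = ⊤ := by
  have hempty : {x | A *ᵥ x = b ∧ 0 ≤ x} = ∅ := Set.eq_empty_of_forall_notMem fun x hx => hP ⟨x, hx⟩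
  rw [primalValA, hempty, Set.image_empty, sInf_empty]

theorem dualValA_eq_bot {c : Fin n → ℝ} (hD : ¬∃ y, Aᵀ *ᵥ y ≤ c) :
    dualValA A b c = ⊥ := by
  have hempty : {y | Aᵀ *ᵥ y ≤ c} = ∅ := Set.eq_empty_of_forall_notMem fun y hy => hD ⟨y, hy⟩
  rw [dualValA, hempty, Set.image_empty, sSup_empty]

theorem primalValA_le {b : Fin m → ℝ} {x : Fin n → ℝ} (hx : A *ᵥ x = b) (hx₀ : 0 ≤ x) :
    primalValA A b c ≤ (c ⬝ᵥ x : ℝ) :=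
  sInf_le ⟨x, ⟨hx, hx₀⟩, rfl⟩

theorem le_dualValA {c : Fin n → ℝ} {y : Fin m → ℝ} (hy : Aᵀ *ᵥ y ≤ c) :
    (b ⬝ᵥ y : ℝ) ≤ dualValA A b c :=
  le_sSup ⟨y, hy, rfl⟩

/- Below the primal value the system `Ax = b, x ≥ 0, cᵀx ≤ δ` is infeasible; Farkas applied to it
yields a dual solution of value above `δ`. -/
theorem exists_dual_gt_of_lt_primalValA {b : Fin m → ℝ} {c : Fin n → ℝ}
    (hP : ∃ x, A *ᵥ x = b ∧ 0 ≤ x) {δ : ℝ} (hδ : (δ : EReal) < primalValA A b c) :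
    ∃ y, Aᵀ *ᵥ y ≤ c ∧ δ < b ⬝ᵥ y := by
  obtain ⟨x₀, hx₀, hx₀_nonneg⟩ := hP
  rcases (fromBlocks A (0 : Matrix (Fin m) Unit ℝ) (replicateRow Unit c) 1).farkas_s10
    (Sum.elim b fun _ => δ) with ⟨x, hx, hxb⟩ | ⟨y, hy, hyb⟩
  · have hAx : A *ᵥ (x ∘ Sum.inl) = b := funext fun k => by
      simpa [fromBlocks_mulVec] using congrFun hxb (Sum.inl k)
    have hcx : c ⬝ᵥ (x ∘ Sum.inl) + x (Sum.inr ()) = δ := by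
      simpa [fromBlocks_mulVec, replicateRow_mulVec_eq_const] using congrFun hxb (Sum.inr ())
    have hslack : 0 ≤ x (Sum.inr ()) := hx _
    have hle : primalValA A b c ≤ δ := (primalValA_le A c hAx fun j => hx _).trans
      (EReal.coe_le_coe_iff.2 (by linarith))
    exact absurd hδ hle.not_gt
  · obtain ⟨y, η, rfl⟩ : ∃ (y' : Fin m → ℝ) (η : ℝ), y = Sum.elim y' fun _ => η :=
      ⟨y ∘ Sum.inl, y (Sum.inr ()), by ext (i | _) <;> rfl⟩
    have hη : 0 ≤ η := by simpa [fromBlocks_transpose, fromBlocks_mulVec] using hy (Sum.inr ())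
    have hAy : ∀ j, 0 ≤ (Aᵀ *ᵥ y) j + c j * η := fun j => by
      simpa [fromBlocks_transpose, fromBlocks_mulVec, mulVec, dotProduct] using hy (Sum.inl j)
    have hby : b ⬝ᵥ y + δ * η < 0 := by simpa [dotProduct, Fintype.sum_sum_type] using hyb
    rcases hη.eq_or_lt with rfl | hη
    · have hAy : Aᵀ *ᵥ -y ≤ 0 := fun j => by simpa [mulVec_neg] using hAy j
      have := weak_duality_s10 hx₀ hx₀_nonneg hAy
      simp only [dotProduct_neg, zero_dotProduct, mul_zero, add_zero] at this hby
      linarith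
    · refine ⟨-η⁻¹ • y, fun j => ?_, ?_⟩
      · have := hAy j
        rw [mulVec_smul, Pi.smul_apply, smul_eq_mul, neg_mul, neg_le, ← sub_nonneg]
        field_simp
        linarith
      · rw [dotProduct_smul, smul_eq_mul, neg_mul, lt_neg]
        field_simp
        linarith

theorem primalValA_le_dualValA (hP : ∃ x, A *ᵥ x = b ∧ 0 ≤ x) :
    primalValA A b c ≤ dualValA A b c := by
  refine EReal.le_of_forall_lt_iff_le.1 fun z hz => ?_
  by_contra! hzP
  obtain ⟨y, hy, hzy⟩ := exists_dual_gt_of_lt_primalValA A hP hzP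
  exact (hz.trans (EReal.coe_lt_coe_iff.2 hzy)).not_ge (le_dualValA A b hy)

theorem dualValA_eq_top {b : Fin m → ℝ} {c : Fin n → ℝ} (hP : ¬∃ x, A *ᵥ x = b ∧ 0 ≤ x)
    (hD : ∃ y, Aᵀ *ᵥ y ≤ c) : dualValA A b c = ⊤ := by
  obtain ⟨y₀, hy₀⟩ := hD
  obtain ⟨y₁, hy₁, hby₁⟩ : ∃ y₁, 0 ≤ Aᵀ *ᵥ y₁ ∧ b ⬝ᵥ y₁ < 0 :=
    (A.farkas_s10 b).resolve_left fun ⟨x, hx, hxb⟩ => hP ⟨x, hxb, hx⟩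
  refine (EReal.eq_top_iff_forall_lt _).2 fun r => ?_
  obtain ⟨k, hk⟩ := exists_lt_nsmul (neg_pos.2 hby₁) (r - b ⬝ᵥ y₀)
  refine lt_of_lt_of_le ?_ (le_dualValA A b (y := y₀ - (k : ℝ) • y₁) ?_)
  · rw [EReal.coe_lt_coe_iff, dotProduct_sub, dotProduct_smul]
    rw [nsmul_eq_mul] at hk
    simp only [smul_eq_mul]
    linarith
  · show Aᵀ *ᵥ _ ≤ c
    rw [mulVec_sub, mulVec_smul, sub_le_iff_le_add]
    exact hy₀.trans (le_add_of_nonneg_right (smul_nonneg k.cast_nonneg hy₁))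

theorem primalValA_eq_dualValA_iff :
    primalValA A b c = dualValA A b c ↔ (∃ x, A *ᵥ x = b ∧ 0 ≤ x) ∨ ∃ y, Aᵀ *ᵥ y ≤ c := by
  refine ⟨fun h => ?_, fun h => ?_⟩
  · by_contra hPD
    obtain ⟨hP, hD⟩ := not_or.1 hPD
    rw [primalValA_eq_top A c hP, dualValA_eq_bot A b hD] at h
    exact top_ne_bot h
  by_cases hP : ∃ x, A *ᵥ x = b ∧ 0 ≤ x
  · exact (primalValA_le_dualValA A b c hP).antisymm (dualValA_le_primalValA A b c)
  · rw [primalValA_eq_top A c hP, dualValA_eq_top A hP (h.resolve_left hP)]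

end LinearProgram

theorem convex_setOf_exists_nonneg_mulVec_eq {κ ι : Type*} [Fintype ι] (A : Matrix κ ι ℝ) :
    Convex ℝ {b | ∃ x, A *ᵥ x = b ∧ 0 ≤ x} := by
  rintro _ ⟨x₁, rfl, hx₁⟩ _ ⟨x₂, rfl, hx₂⟩ s t hs ht -
  exact ⟨s • x₁ + t • x₂, by rw [mulVec_add, mulVec_smul, mulVec_smul],
    add_nonneg (smul_nonneg hs hx₁) (smul_nonneg ht hx₂)⟩

theorem Convex.Icc_subset_of_pi_pair_subset {ι : Type*} [Finite ι] {S : Set (ι → ℝ)}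
    (hS : Convex ℝ S) {l u : ι → ℝ} (h : Set.univ.pi (fun i => {l i, u i}) ⊆ S) :
    Set.Icc l u ⊆ S := by
  rw [← Set.pi_univ_Icc]
  calc Set.univ.pi (fun i => Set.Icc (l i) (u i))
      ⊆ Set.univ.pi (fun i => convexHull ℝ {l i, u i}) := Set.pi_mono fun i _ => by
        rw [convexHull_pair, segment_eq_uIcc]; exact Set.Icc_subset_uIcc
    _ = convexHull ℝ (Set.univ.pi fun i => {l i, u i}) := (convexHull_pi _ _).symm
    _ ⊆ S := convexHull_min h hS

section SignVertex

variable {ι : Type*} {l u p : ι → ℝ}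

theorem sign_vertex_mem_Icc (hlu : l ≤ u) (hp : ∀ i, p i = 1 ∨ p i = -1) :
    (fun i => (l i + u i) / 2 + p i * ((u i - l i) / 2)) ∈ Set.Icc l u := by
  constructor <;> intro i <;> rcases hp i with h | h <;> simp only [h] <;> linarith [hlu i]

theorem exists_sign_of_mem_pi_pair {v : ι → ℝ} (hv : v ∈ Set.univ.pi fun i => {l i, u i}) :
    ∃ p : ι → ℝ, (∀ i, p i = 1 ∨ p i = -1) ∧
      v = fun i => (l i + u i) / 2 + p i * ((u i - l i) / 2) := by
  classical
  refine ⟨fun i => if v i = l i then -1 else 1, fun i => by dsimp only; split_ifs <;> simp,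
    funext fun i => ?_⟩
  dsimp only
  split_ifs with hl
  · rw [hl]; ring
  · rw [(hv i trivial).resolve_left hl]; ring

end SignVertex

/-- A type (A) ILP with fixed matrix has strongly zero duality gap iff
(i) `Ax = b_c + diag(p)·Δ_b, x ≥ 0` is feasible for every sign vector `p`, or
(ii) `Aᵀy ≤ c̲` is feasible. -/
theorem typeA_degenerate_strongly_zero_dg_iff {m n : ℕ}
    (A : Matrix (Fin m) (Fin n) ℝ) (bL bU : Fin m → ℝ) (cL cU : Fin n → ℝ)
    (hb : bL ≤ bU) (hc : cL ≤ cU) :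
    (∀ b c, bL ≤ b → b ≤ bU → cL ≤ c → c ≤ cU →
        primalValA A b c = dualValA A b c) ↔
      ((∀ p : Fin m → ℝ, (∀ i, p i = 1 ∨ p i = -1) →
          ∃ x : Fin n → ℝ,
            A.mulVec x = (fun i => (bL i + bU i) / 2 + p i * ((bU i - bL i) / 2)) ∧ 0 ≤ x) ∨
       (∃ y : Fin m → ℝ, Aᵀ.mulVec y ≤ cL)) := by
  constructor
  · intro h
    refine or_iff_not_imp_right.2 fun hD p hp => ?_
    obtain ⟨hpL, hpU⟩ := sign_vertex_mem_Icc hb hp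
    exact ((primalValA_eq_dualValA_iff A _ cL).1 (h _ cL hpL hpU le_rfl hc)).resolve_right hD
  · rintro (hP | ⟨y, hy⟩) b c hbL hbU hcL -
    · refine (primalValA_eq_dualValA_iff A b c).2 (.inl ?_)
      refine (convex_setOf_exists_nonneg_mulVec_eq A).Icc_subset_of_pi_pair_subset
        (fun v hv => ?_) ⟨hbL, hbU⟩
      obtain ⟨p, hp, rfl⟩ := exists_sign_of_mem_pi_pair hv
      exact hP p hp
    · exact (primalValA_eq_dualValA_iff A b c).2 (.inr ⟨y, hy.trans hcL⟩)
end
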